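/- Let B ∈ ℂ^{m×g}, C ∈ ℂ^{h×n}, A ∈ ℂ^{m×n}, and X ∈ ℂ^{g×h} arbitrary. Then the Pythagorean identity ‖A − B·X·C‖_F² = ‖A − B·B†·A·C†·C‖_F² + ‖B·B†·A·C†·C − B·X·C‖_F² holds. -/

import Mathlib

open Matrix

noncomputable def frob {m n : Type*} [Fintype m] [Fintype n] (A : Matrix m n ℂ) : ℝ :=
  Real.sqrt (∑ i, ∑ j, ‖A i j‖ ^ 2)

def IsMPInv {m n : Type*} [Fintype m] [Fintype n]
    (B : Matrix m n ℂ) (Bd : Matrix n m ℂ) : Prop :=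
  B * Bd * B = B ∧ Bd * B * Bd = Bd ∧ (B * Bd)ᴴ = B * Bd ∧ (Bd * B)ᴴ = Bd * B

/-! `P = B * Bd` and `Q = Cd * C` are orthogonal projections. The map `Y ↦ P * Y * Q` kills
`A - P * A * Q` and fixes `P * A * Q - B * X * C`, so by self-adjointness of `P` and `Q` these two
matrices are orthogonal for the Frobenius inner product `Re tr (Uᴴ * V)`, and the identity is
Pythagoras' theorem for them. -/

section

variable {m n : Type*} [Fintype m] [Fintype n]

theorem frob_sq_eq_re_trace (A : Matrix m n ℂ) : frob A ^ 2 = (Aᴴ * A).trace.re := by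
  rw [frob, Real.sq_sqrt (by positivity), Finset.sum_comm]
  simp [trace, mul_apply, Complex.re_sum, Complex.sq_norm, Complex.normSq_apply]

theorem frob_add_sq (U V : Matrix m n ℂ) :
    frob (U + V) ^ 2 = frob U ^ 2 + frob V ^ 2 + 2 * (Uᴴ * V).trace.re := by
  have hVU : (Vᴴ * U).trace = star (Uᴴ * V).trace := by
    rw [← trace_conjTranspose, conjTranspose_mul, conjTranspose_conjTranspose]
  simp only [frob_sq_eq_re_trace, conjTranspose_add, Matrix.add_mul, Matrix.mul_add, trace_add,
    Complex.add_re, hVU, Complex.star_def, Complex.conj_re]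
  ring

theorem trace_conjTranspose_mul_eq_zero {α : Type*} [CommRing α] [StarRing α]
    {P : Matrix m m α} {Q : Matrix n n α} (hP : P.IsHermitian) (hQ : Q.IsHermitian)
    {U V : Matrix m n α} (hU : P * U * Q = 0) (hV : P * V * Q = V) : (Uᴴ * V).trace = 0 :=
  calc (Uᴴ * V).trace = (Uᴴ * P * V * Q).trace := by
        nth_rewrite 1 [← hV]; simp only [Matrix.mul_assoc]
    _ = (Q * Uᴴ * P * V).trace := by rw [trace_mul_comm]; simp only [Matrix.mul_assoc]
    _ = ((P * U * Q)ᴴ * V).trace := by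
        rw [conjTranspose_mul, conjTranspose_mul, hP.eq, hQ.eq]
        simp only [Matrix.mul_assoc]
    _ = 0 := by rw [hU, conjTranspose_zero, Matrix.zero_mul, trace_zero]

theorem frob_sub_sq_eq_of_isStarProjection {P : Matrix m m ℂ} {Q : Matrix n n ℂ}
    (hP : IsStarProjection P) (hQ : IsStarProjection Q) (A : Matrix m n ℂ) {Y : Matrix m n ℂ}
    (hY : P * Y * Q = Y) :
    frob (A - Y) ^ 2 = frob (A - P * A * Q) ^ 2 + frob (P * A * Q - Y) ^ 2 := by
  have hPAQ : P * (P * A * Q) * Q = P * A * Q := by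
    rw [← Matrix.mul_assoc, ← Matrix.mul_assoc, hP.isIdempotentElem.eq, Matrix.mul_assoc,
      hQ.isIdempotentElem.eq]
  have horth : ((A - P * A * Q)ᴴ * (P * A * Q - Y)).trace = 0 :=
    trace_conjTranspose_mul_eq_zero hP.isSelfAdjoint.isHermitian hQ.isSelfAdjoint.isHermitian
      (by rw [Matrix.mul_sub, Matrix.sub_mul, hPAQ, sub_self])
      (by rw [Matrix.mul_sub, Matrix.sub_mul, hPAQ, hY])
  rw [← sub_add_sub_cancel A (P * A * Q) Y, frob_add_sq, horth, Complex.zero_re, mul_zero,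
    add_zero]

namespace IsMPInv

variable {B : Matrix m n ℂ} {Bd : Matrix n m ℂ}

theorem isStarProjection_mul_pinv (hB : IsMPInv B Bd) : IsStarProjection (B * Bd) where
  isIdempotentElem := by rw [IsIdempotentElem, ← Matrix.mul_assoc, hB.1]
  isSelfAdjoint := hB.2.2.1

theorem isStarProjection_pinv_mul (hB : IsMPInv B Bd) : IsStarProjection (Bd * B) where
  isIdempotentElem := by rw [IsIdempotentElem, ← Matrix.mul_assoc, hB.2.1]
  isSelfAdjoint := hB.2.2.2

end IsMPInv

end

theorem stmt14 {m n g h : ℕ} (A : Matrix (Fin m) (Fin n) ℂ)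
    (B : Matrix (Fin m) (Fin g) ℂ) (Bd : Matrix (Fin g) (Fin m) ℂ)
    (C : Matrix (Fin h) (Fin n) ℂ) (Cd : Matrix (Fin n) (Fin h) ℂ)
    (hB : IsMPInv B Bd) (hC : IsMPInv C Cd)
    (X : Matrix (Fin g) (Fin h) ℂ) :
    frob (A - B * X * C) ^ 2 =
      frob (A - B * Bd * A * Cd * C) ^ 2 +
        frob (B * Bd * A * Cd * C - B * X * C) ^ 2 := by
  have hBXC : B * Bd * (B * X * C) * (Cd * C) = B * X * C := by
    calc B * Bd * (B * X * C) * (Cd * C) = (B * Bd * B) * X * (C * Cd * C) := by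
          simp only [Matrix.mul_assoc]
      _ = B * X * C := by rw [hB.1, hC.1]
  have hPAQ : B * Bd * A * Cd * C = B * Bd * A * (Cd * C) := by simp only [Matrix.mul_assoc]
  rw [hPAQ]
  exact frob_sub_sq_eq_of_isStarProjection hB.isStarProjection_mul_pinv
    hC.isStarProjection_pinv_mul A hBXC
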